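/- arXiv:1304.0269 — 2 statements merged into one kernel-verified Lean document; each statement's English description precedes it below -/
import Mathlib

section
/- For a real number q with 0<q<1 and integers n≥1, l≥0 with l≤n, we have ∑_{k=l+1}^n (1+q^k) [k]_q · ([n choose k]_q / [n+k choose k]_q) · q^{k(k-1)} = ([n]_q - [l]_q) · ([n choose l]_q / [n+l choose l]_q) · q^{l^2}. -/
open Finset

/-- q-analogue of a natural number: [m]_q = (1-q^m)/(1-q). -/
noncomputable def qnum (q : ℝ) (m : ℕ) : ℝ := (1 - q ^ m) / (1 - q)

/-- q-Pochhammer (q;q)_n = ∏_{k=0}^{n-1} (1 - q^{k+1}). -/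
noncomputable def qPoch (q : ℝ) (n : ℕ) : ℝ := ∏ k ∈ Finset.range n, (1 - q ^ (k + 1))

/-- Gaussian q-binomial coefficient, 0 when m > n. -/
noncomputable def qbinom (q : ℝ) (n m : ℕ) : ℝ :=
  if m ≤ n then qPoch q n / (qPoch q m * qPoch q (n - m)) else 0

/-- q-multiple harmonic star sum H_n^*[s₁,…,s_m]. -/
noncomputable def qHstar (q : ℝ) : List ℕ → ℕ → ℝ
  | [], _ => 1
  | s :: rest, n => ∑ k ∈ Finset.Icc 1 n, q ^ k / qnum q k ^ s * qHstar q rest k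

/-- q-multiple zeta star value ζ_q^*[s₁,…,s_m]. -/
noncomputable def qZetaStar (q : ℝ) : List ℕ → ℝ
  | [] => 1
  | s :: rest => ∑' k : ℕ, q ^ (k + 1) / qnum q (k + 1) ^ s * qHstar q rest (k + 1)

/-- strict multiple harmonic sum ∑_{n ≥ k₁ > … > k_r ≥ 1} ∏ 1/k_j^{p_j}. -/
noncomputable def Hstrict : List ℕ → ℕ → ℝ
  | [], _ => 1
  | p :: rest, n => ∑ k ∈ Finset.Icc 1 n, (1 : ℝ) / (k : ℝ) ^ p * Hstrict rest (k - 1)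

/-- binomial-weighted strict multiple harmonic sum Ĥ_n(p). -/
noncomputable def Hhat : List ℕ → ℕ → ℝ
  | [], _ => 1
  | p :: rest, n => ∑ k ∈ Finset.Icc 1 n,
      ((n.choose k : ℝ) / ((n + k).choose n)) * ((1 : ℝ) / (k : ℝ) ^ p) * Hstrict rest (k - 1)

/-- ordinary multiple harmonic star sum H_n^*(s₁,…,s_m). -/
noncomputable def HstarO : List ℕ → ℕ → ℝ
  | [], _ => 1
  | s :: rest, n => ∑ k ∈ Finset.Icc 1 n, (1 : ℝ) / (k : ℝ) ^ s * HstarO rest k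

/-- ordinary multiple zeta star value. -/
noncomputable def zetaStarO : List ℕ → ℝ
  | [] => 1
  | s :: rest => ∑' k : ℕ, (1 : ℝ) / ((k : ℝ) + 1) ^ s * HstarO rest (k + 1)

/-- Merge a list of parts according to a comma(true)/plus(false) pattern. -/
def mergeComp : ℕ → List ℕ → List Bool → List ℕ
  | a, [], _ => [a]
  | a, _ :: _, [] => [a]
  | a, b :: t, true :: bs => a :: mergeComp b t bs
  | a, b :: t, false :: bs => mergeComp (a + b) t bs

/-! The summand at `k` is `qTail q n (k - 1) - qTail q n k`, where `qTail q n l` is the right-hand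
side; this reduces to the recursion `R (k + 1) (1 - q ^ (n + k + 1)) = R k (1 - q ^ (n - k))` for the
weights `R k = [n choose k]_q / [n + k choose k]_q`. Hence the sum telescopes to
`qTail q n l - qTail q n n = qTail q n l`. -/

lemma qPoch_succ (q : ℝ) (n : ℕ) : qPoch q (n + 1) = qPoch q n * (1 - q ^ (n + 1)) :=
  prod_range_succ _ n

lemma qPoch_ne_zero {q : ℝ} (hq : ∀ j, q ^ (j + 1) ≠ 1) (n : ℕ) : qPoch q n ≠ 0 :=
  prod_ne_zero_iff.2 fun j _ => sub_ne_zero.2 (hq j).symm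

lemma qbinom_div_qbinom_add {q : ℝ} (hq : ∀ j, q ^ (j + 1) ≠ 1) {n k : ℕ} (hk : k ≤ n) :
    qbinom q n k / qbinom q (n + k) k = qPoch q n ^ 2 / (qPoch q (n - k) * qPoch q (n + k)) := by
  have := qPoch_ne_zero hq k
  rw [qbinom, qbinom, if_pos hk, if_pos (by omega), Nat.add_sub_cancel]
  field_simp

lemma qbinom_div_qbinom_add_succ {q : ℝ} (hq : ∀ j, q ^ (j + 1) ≠ 1) {n k : ℕ} (hk : k < n) :
    qbinom q n (k + 1) / qbinom q (n + (k + 1)) (k + 1) * (1 - q ^ (n + k + 1))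
      = qbinom q n k / qbinom q (n + k) k * (1 - q ^ (n - k)) := by
  obtain ⟨m, rfl⟩ := Nat.exists_eq_add_of_lt hk
  rw [qbinom_div_qbinom_add (k := k + 1) hq hk, qbinom_div_qbinom_add hq hk.le,
    show k + m + 1 - (k + 1) = m by omega, show k + m + 1 - k = m + 1 by omega,
    ← add_assoc, qPoch_succ q (k + m + 1 + k), qPoch_succ q m]
  have := qPoch_ne_zero hq m
  have := qPoch_ne_zero hq (k + m + 1 + k)
  have : 1 - q ^ (k + m + 1 + k + 1) ≠ 0 := sub_ne_zero.2 (hq _).symm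
  have : 1 - q ^ (m + 1) ≠ 0 := sub_ne_zero.2 (hq _).symm
  field_simp

noncomputable def qTail (q : ℝ) (n l : ℕ) : ℝ :=
  (qnum q n - qnum q l) * (qbinom q n l / qbinom q (n + l) l) * q ^ (l ^ 2)

lemma qTail_self (q : ℝ) (n : ℕ) : qTail q n n = 0 := by
  simp [qTail]

lemma qTail_sub_qTail_succ {q : ℝ} (hq : ∀ j, q ^ (j + 1) ≠ 1) {n k : ℕ} (hk : k < n) :
    qTail q n k - qTail q n (k + 1)
      = (1 + q ^ (k + 1)) * qnum q (k + 1)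
        * (qbinom q n (k + 1) / qbinom q (n + (k + 1)) (k + 1)) * q ^ ((k + 1) * k) := by
  have hrec := qbinom_div_qbinom_add_succ hq hk
  simp only [qTail]
  obtain ⟨m, rfl⟩ := Nat.exists_eq_add_of_lt hk
  rw [show k + m + 1 - k = m + 1 by omega] at hrec
  have h1 : 1 - q ≠ 0 := sub_ne_zero.2 (by simpa using (hq 0).symm)
  have h2 : 1 - q ^ (k + m + 1 + k + 1) ≠ 0 := sub_ne_zero.2 (hq _).symm
  rw [eq_div_of_mul_eq h2 hrec]
  -- with `x = q ^ k`, `z = q ^ (m + 1)`, both sides equal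
  -- `R k q ^ (k ^ 2) x (1 - z) (1 - q² x²) / ((1 - q) (1 - q x² z))`
  simp only [qnum]
  field_simp
  ring

theorem stmt1_general (q : ℝ) (hq0 : 0 < q) (hq1 : q < 1) (n l : ℕ) (hl : l ≤ n) :
    ∑ k ∈ Finset.Icc (l + 1) n,
      (1 + q ^ k) * qnum q k * (qbinom q n k / qbinom q (n + k) k) * q ^ (k * (k - 1))
    = (qnum q n - qnum q l) * (qbinom q n l / qbinom q (n + l) l) * q ^ (l ^ 2) := by
  have hq : ∀ j, q ^ (j + 1) ≠ 1 := fun j => (pow_lt_one₀ hq0.le hq1 j.succ_ne_zero).ne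
  calc _ = ∑ k ∈ Ico l n, (qTail q n k - qTail q n (k + 1)) := by
        rw [← Ico_add_one_right_eq_Icc, ← sum_Ico_add']
        exact sum_congr rfl fun k hk => (qTail_sub_qTail_succ hq (mem_Ico.1 hk).2).symm
    _ = qTail q n l - qTail q n n := by
        rw [← neg_sub, ← sum_Ico_sub _ hl, ← sum_neg_distrib]
        simp only [neg_sub]
    _ = _ := by rw [qTail_self, sub_zero, qTail]

theorem stmt1 (q : ℝ) (hq0 : 0 < q) (hq1 : q < 1) (n l : ℕ) (hn : 1 ≤ n) (hl : l ≤ n) :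
    ∑ k ∈ Finset.Icc (l + 1) n,
      (1 + q ^ k) * qnum q k * (qbinom q n k / qbinom q (n + k) k) * q ^ (k * (k - 1))
    = (qnum q n - qnum q l) * (qbinom q n l / qbinom q (n + l) l) * q ^ (l ^ 2) :=
  stmt1_general q hq0 hq1 n l hl
end

section
/- For 0<q<1 and any nonnegative integer s, ζ_q^*[{2}^s, 1] = ∑_{k=1}^∞ ((1+q^k)/[k]_q^{2s+1}) q^{k^2 + sk}. -/
open Finset

/-!
Write `A n k = ∏_{j<k} (1 - q^(n-j)) / (1 - q^(n+1+j))` and `c s k` for the `k`-th summand on the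
right. The partial sums satisfy the finite identity `H_n^*[{2}^s, 1] = ∑_{k=1}^n A n k * c s k`.
Prepending a `2` multiplies `c s k` by `q^k / [k]^2`, thanks to the telescoping relation
`q^k / [k]^2 * (A (n+1) k - A n k) = q^(n+1) / [n+1]^2 * A (n+1) k`, which comes from the ratio of
`A (n+1) k` to `A n k`. The case `s = 0` is the same step applied to
`[n] = ∑_{k=1}^n A n k * q^(k(k-1)) [2k]`, another telescoping sum. Finally `0 ≤ A n k ≤ 1` and
`A n k → 1` as `n → ∞`, so Tannery's theorem passes to the limit.
-/

open Filter Topology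

/-- The q-analogue of `n.choose k / (n + k).choose k = n! ^ 2 / ((n - k)! * (n + k)!)`; the
truncated subtraction `n - j` makes it vanish for `k > n`. -/
noncomputable def qChooseRatio (q : ℝ) (n k : ℕ) : ℝ :=
  ∏ j ∈ range k, (1 - q ^ (n - j)) / (1 - q ^ (n + 1 + j))

noncomputable def qZetaTwoOneTerm (q : ℝ) (s k : ℕ) : ℝ :=
  (1 + q ^ k) / qnum q k ^ (2 * s + 1) * q ^ (k ^ 2 + s * k)

lemma sum_Icc_one_eq_sum_range {M : Type*} [AddCommMonoid M] (f : ℕ → M) (n : ℕ) :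
    ∑ k ∈ Icc 1 n, f k = ∑ i ∈ range n, f (i + 1) := by
  rw [range_eq_Ico, sum_Ico_add' f 0 n 1]
  rfl

section

variable {q : ℝ}

lemma one_sub_pow_ne_zero (hq0 : 0 ≤ q) (hq1 : q < 1) {m : ℕ} (hm : m ≠ 0) : 1 - q ^ m ≠ 0 :=
  (sub_pos.2 (pow_lt_one₀ hq0 hq1 hm)).ne'

lemma qnum_nonneg (hq : 0 ≤ q) (m : ℕ) : 0 ≤ qnum q m := by
  rcases lt_or_ge q 1 with h | h
  · exact div_nonneg (sub_nonneg.2 (pow_le_one₀ hq h.le)) (sub_nonneg.2 h.le)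
  · exact div_nonneg_of_nonpos (sub_nonpos.2 (one_le_pow₀ h)) (sub_nonpos.2 h)

lemma one_le_qnum (hq0 : 0 ≤ q) (hq1 : q < 1) {m : ℕ} (hm : m ≠ 0) : 1 ≤ qnum q m := by
  rw [qnum, le_div_iff₀ (sub_pos.2 hq1), one_mul]
  linarith [pow_le_of_le_one hq0 hq1.le hm]

lemma qnum_ne_zero (hq0 : 0 ≤ q) (hq1 : q < 1) {m : ℕ} (hm : m ≠ 0) : qnum q m ≠ 0 :=
  (zero_lt_one.trans_le (one_le_qnum hq0 hq1 hm)).ne'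

lemma qnum_two_mul (k : ℕ) : qnum q (2 * k) = qnum q k * (1 + q ^ k) := by
  simp only [qnum]
  ring

lemma qHstar_nonneg (hq : 0 ≤ q) : ∀ (l : List ℕ) (n : ℕ), 0 ≤ qHstar q l n
  | [], _ => by rw [qHstar]; exact zero_le_one
  | s :: l, n => sum_nonneg fun k _ => mul_nonneg
      (div_nonneg (pow_nonneg hq k) (pow_nonneg (qnum_nonneg hq k) s)) (qHstar_nonneg hq l k)

lemma qChooseRatio_zero_right (n : ℕ) : qChooseRatio q n 0 = 1 := prod_range_zero _

lemma qChooseRatio_succ (n k : ℕ) :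
    qChooseRatio q n (k + 1) = qChooseRatio q n k * ((1 - q ^ (n - k)) / (1 - q ^ (n + 1 + k))) :=
  prod_range_succ _ _

lemma qChooseRatio_eq_zero_of_lt {n k : ℕ} (h : n < k) : qChooseRatio q n k = 0 :=
  prod_eq_zero (mem_range.2 h) (by simp)

lemma qChooseRatio_nonneg (hq0 : 0 ≤ q) (hq1 : q ≤ 1) (n k : ℕ) : 0 ≤ qChooseRatio q n k :=
  prod_nonneg fun _ _ =>
    div_nonneg (sub_nonneg.2 (pow_le_one₀ hq0 hq1)) (sub_nonneg.2 (pow_le_one₀ hq0 hq1))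

lemma qChooseRatio_le_one (hq0 : 0 ≤ q) (hq1 : q < 1) (n k : ℕ) : qChooseRatio q n k ≤ 1 :=
  prod_le_one
    (fun _ _ => div_nonneg (sub_nonneg.2 (pow_le_one₀ hq0 hq1.le))
      (sub_nonneg.2 (pow_le_one₀ hq0 hq1.le)))
    fun _ _ => (div_le_one (sub_pos.2 (pow_lt_one₀ hq0 hq1 (by omega)))).2
      (sub_le_sub_left (pow_le_pow_of_le_one hq0 hq1.le (by omega)) 1)

lemma tendsto_qChooseRatio (hq0 : 0 ≤ q) (hq1 : q < 1) (k : ℕ) :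
    Tendsto (fun n => qChooseRatio q n k) atTop (𝓝 1) := by
  have hfactor (m : ℕ → ℕ) (hm : Tendsto m atTop atTop) :
      Tendsto (fun n => 1 - q ^ m n) atTop (𝓝 1) := by
    simpa using tendsto_const_nhds.sub ((tendsto_pow_atTop_nhds_zero_of_lt_one hq0 hq1).comp hm)
  unfold qChooseRatio
  simpa only [Pi.div_apply, div_one, prod_const_one] using tendsto_finsetProd (range k) fun j _ =>
    (hfactor _ (tendsto_sub_atTop_nat j)).div
      (hfactor (· + 1 + j) (tendsto_atTop_mono (fun n => show n ≤ n + 1 + j by omega) tendsto_id))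
      one_ne_zero

lemma qChooseRatio_mul_one_sub_pow_sq (hq0 : 0 ≤ q) (hq1 : q < 1) (n k : ℕ) :
    qChooseRatio q n k * (1 - q ^ (n + 1)) ^ 2
      = qChooseRatio q (n + 1) k * ((1 - q ^ (n + 1 - k)) * (1 - q ^ (n + 1 + k))) := by
  induction k with
  | zero => rw [qChooseRatio_zero_right, qChooseRatio_zero_right, Nat.sub_zero, add_zero]; ring
  | succ k ih =>
    have h1 := one_sub_pow_ne_zero hq0 hq1 (m := n + 1 + k) (by omega)
    have h2 := one_sub_pow_ne_zero hq0 hq1 (m := n + 1 + 1 + k) (by omega)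
    rw [qChooseRatio_succ, qChooseRatio_succ, mul_right_comm, ih,
      show n + 1 - (k + 1) = n - k by omega, show n + 1 + (k + 1) = n + 1 + 1 + k by omega]
    field_simp

lemma pow_div_qnum_sq_mul_qChooseRatio_sub (hq0 : 0 ≤ q) (hq1 : q < 1) {n k : ℕ} (hk : k ≠ 0)
    (hkn : k ≤ n + 1) :
    q ^ k / qnum q k ^ 2 * (qChooseRatio q (n + 1) k - qChooseRatio q n k)
      = q ^ (n + 1) / qnum q (n + 1) ^ 2 * qChooseRatio q (n + 1) k := by
  have hR := qChooseRatio_mul_one_sub_pow_sq hq0 hq1 n k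
  obtain ⟨d, hd⟩ : ∃ d, n + 1 = k + d := ⟨n + 1 - k, by omega⟩
  rw [hd, Nat.add_sub_cancel_left] at hR
  rw [hd]
  have key : q ^ k * (qChooseRatio q (k + d) k - qChooseRatio q n k) * (1 - q ^ (k + d)) ^ 2
      = q ^ (k + d) * qChooseRatio q (k + d) k * (1 - q ^ k) ^ 2 := by
    linear_combination (-q ^ k) * hR
  have h1 := one_sub_pow_ne_zero hq0 hq1 hk
  have h2 := one_sub_pow_ne_zero hq0 hq1 (m := k + d) (by omega)
  have h3 : 1 - q ≠ 0 := (sub_pos.2 hq1).ne'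
  simp only [qnum]
  field_simp
  linear_combination key

lemma sum_qChooseRatio_mul_qnum_two_mul (hq0 : 0 ≤ q) (hq1 : q < 1) (n : ℕ) :
    ∑ k ∈ Icc 1 n, qChooseRatio q n k * (q ^ (k * (k - 1)) * qnum q (2 * k)) = qnum q n := by
  rcases Nat.eq_zero_or_pos n with rfl | hn
  · simp [qnum]
  set G : ℕ → ℝ := fun k => qChooseRatio q n k * q ^ (k * (k - 1)) * qnum q (n + k) with hG
  have hstep : ∀ k ∈ Icc 1 n,
      qChooseRatio q n k * (q ^ (k * (k - 1)) * qnum q (2 * k)) = -(G (k + 1) - G k) := by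
    intro k hk
    obtain ⟨hk1, hkn⟩ := mem_Icc.1 hk
    obtain ⟨d, rfl⟩ : ∃ d, n = k + d := ⟨n - k, by omega⟩
    obtain ⟨e, rfl⟩ : ∃ e, k = e + 1 := ⟨k - 1, by omega⟩
    have h1 := one_sub_pow_ne_zero hq0 hq1 (m := e + 1 + d + 1 + (e + 1)) (by omega)
    have h2 : 1 - q ≠ 0 := (sub_pos.2 hq1).ne'
    simp only [hG, qChooseRatio_succ, qnum, Nat.add_sub_cancel, Nat.add_sub_cancel_left]
    field_simp
    ring
  have hG1 : G 1 = qnum q n := by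
    have h1 := one_sub_pow_ne_zero hq0 hq1 (m := n + 1) (by omega)
    simp only [hG, qChooseRatio_succ, qChooseRatio_zero_right, qnum]
    field_simp
    simp
  have hGn : G (n + 1) = 0 := by
    simp only [hG, qChooseRatio_eq_zero_of_lt (Nat.lt_succ_self n), zero_mul]
  rw [sum_congr rfl hstep, sum_neg_distrib, sum_Icc_sub hn, hG1, hGn]
  ring

lemma sum_Icc_qChooseRatio_mul_succ (g : ℕ → ℝ) (n : ℕ) :
    ∑ k ∈ Icc 1 n, qChooseRatio q n k * g k = ∑ k ∈ Icc 1 (n + 1), qChooseRatio q n k * g k := by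
  rw [sum_Icc_succ_top (by omega), qChooseRatio_eq_zero_of_lt (Nat.lt_succ_self n), zero_mul,
    add_zero]

lemma sum_pow_div_qnum_sq_mul_of_eq_sum_qChooseRatio (hq0 : 0 ≤ q) (hq1 : q < 1) {f g : ℕ → ℝ}
    (hf : ∀ m, f m = ∑ k ∈ Icc 1 m, qChooseRatio q m k * g k) (n : ℕ) :
    ∑ m ∈ Icc 1 n, q ^ m / qnum q m ^ 2 * f m
      = ∑ k ∈ Icc 1 n, qChooseRatio q n k * (q ^ k / qnum q k ^ 2 * g k) := by
  induction n with
  | zero => simp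
  | succ n ih =>
    rw [sum_Icc_succ_top (by omega), ih, hf, sum_Icc_qChooseRatio_mul_succ (q := q) _ n, eq_comm,
      ← sub_eq_iff_eq_add', ← sum_sub_distrib, mul_sum]
    refine sum_congr rfl fun k hk => ?_
    obtain ⟨hk1, hkn⟩ := mem_Icc.1 hk
    linear_combination g k * pow_div_qnum_sq_mul_qChooseRatio_sub hq0 hq1 (by omega) hkn

lemma qZetaTwoOneTerm_zero (hq0 : 0 ≤ q) (hq1 : q < 1) {k : ℕ} (hk : k ≠ 0) :
    qZetaTwoOneTerm q 0 k = q ^ k / qnum q k ^ 2 * (q ^ (k * (k - 1)) * qnum q (2 * k)) := by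
  have h := qnum_ne_zero hq0 hq1 hk
  obtain ⟨e, rfl⟩ : ∃ e, k = e + 1 := ⟨k - 1, by omega⟩
  rw [qnum_two_mul, qZetaTwoOneTerm, Nat.add_sub_cancel]
  field_simp
  ring

lemma qZetaTwoOneTerm_succ (s k : ℕ) :
    qZetaTwoOneTerm q (s + 1) k = q ^ k / qnum q k ^ 2 * qZetaTwoOneTerm q s k := by
  simp only [qZetaTwoOneTerm]
  ring

lemma qZetaTwoOneTerm_nonneg (hq : 0 ≤ q) (s k : ℕ) : 0 ≤ qZetaTwoOneTerm q s k :=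
  mul_nonneg (div_nonneg (add_nonneg zero_le_one (pow_nonneg hq k))
    (pow_nonneg (qnum_nonneg hq k) _)) (pow_nonneg hq _)

lemma qZetaTwoOneTerm_le (hq0 : 0 ≤ q) (hq1 : q < 1) (s : ℕ) {k : ℕ} (hk : k ≠ 0) :
    qZetaTwoOneTerm q s k ≤ 2 * q ^ k := by
  have hfrac : (1 + q ^ k) / qnum q k ^ (2 * s + 1) ≤ 2 :=
    (div_le_self (add_nonneg zero_le_one (pow_nonneg hq0 k))
      (one_le_pow₀ (one_le_qnum hq0 hq1 hk))).trans
      (by linarith [pow_le_one₀ hq0 hq1.le (n := k)])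
  have hpow : q ^ (k ^ 2 + s * k) ≤ q ^ k :=
    pow_le_pow_of_le_one hq0 hq1.le ((Nat.le_self_pow two_ne_zero k).trans (Nat.le_add_right _ _))
  exact mul_le_mul hfrac hpow (pow_nonneg hq0 _) zero_le_two

lemma summable_qZetaTwoOneTerm (hq0 : 0 ≤ q) (hq1 : q < 1) (s : ℕ) :
    Summable fun k => qZetaTwoOneTerm q s (k + 1) :=
  Summable.of_nonneg_of_le (fun _ => qZetaTwoOneTerm_nonneg hq0 s _)
    (fun k => qZetaTwoOneTerm_le hq0 hq1 s k.succ_ne_zero)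
    ((summable_nat_add_iff 1).2 ((summable_geometric_of_lt_one hq0 hq1).mul_left 2))

theorem qHstar_replicate_two_append_one (hq0 : 0 ≤ q) (hq1 : q < 1) (s n : ℕ) :
    qHstar q (List.replicate s 2 ++ [1]) n
      = ∑ k ∈ Icc 1 n, qChooseRatio q n k * qZetaTwoOneTerm q s k := by
  induction s generalizing n with
  | zero =>
    have hH : qHstar q [1] n = ∑ m ∈ Icc 1 n, q ^ m / qnum q m ^ 2 * qnum q m := by
      simp only [qHstar, pow_one, mul_one]
      refine sum_congr rfl fun m hm => ?_
      have := qnum_ne_zero hq0 hq1 (Nat.one_le_iff_ne_zero.1 (mem_Icc.1 hm).1)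
      field_simp
    rw [List.replicate_zero, List.nil_append, hH,
      sum_pow_div_qnum_sq_mul_of_eq_sum_qChooseRatio hq0 hq1
        fun m => (sum_qChooseRatio_mul_qnum_two_mul hq0 hq1 m).symm]
    exact sum_congr rfl fun k hk => congrArg _
      (qZetaTwoOneTerm_zero hq0 hq1 (Nat.one_le_iff_ne_zero.1 (mem_Icc.1 hk).1)).symm
  | succ s ih =>
    rw [List.replicate_succ, List.cons_append, qHstar,
      sum_pow_div_qnum_sq_mul_of_eq_sum_qChooseRatio hq0 hq1 ih]
    exact sum_congr rfl fun k _ => congrArg _ (qZetaTwoOneTerm_succ s k).symm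

lemma tendsto_sum_qChooseRatio_mul (hq0 : 0 ≤ q) (hq1 : q < 1) {c : ℕ → ℝ}
    (hc : ∀ k, 0 ≤ c k) (hsum : Summable fun k => c (k + 1)) :
    Tendsto (fun n => ∑ k ∈ Icc 1 n, qChooseRatio q n k * c k) atTop (𝓝 (∑' k, c (k + 1))) := by
  have hfin : ∀ n, ∑ k ∈ Icc 1 n, qChooseRatio q n k * c k
      = ∑' k, qChooseRatio q n (k + 1) * c (k + 1) := fun n => by
    rw [sum_Icc_one_eq_sum_range]
    exact (tsum_eq_sum fun k hk => by
      rw [qChooseRatio_eq_zero_of_lt (Nat.lt_succ_of_le (by simpa using hk)), zero_mul]).symm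
  simp only [hfin]
  refine tendsto_tsum_of_dominated_convergence hsum (fun k => by
    simpa using (tendsto_qChooseRatio hq0 hq1 (k + 1)).mul_const (c (k + 1)))
    (Eventually.of_forall fun n k => ?_)
  rw [Real.norm_eq_abs, abs_of_nonneg (mul_nonneg (qChooseRatio_nonneg hq0 hq1.le _ _) (hc _))]
  exact mul_le_of_le_one_left (hc _) (qChooseRatio_le_one hq0 hq1 _ _)

lemma qZetaStar_eq_of_tendsto (hq : 0 ≤ q) {l : List ℕ} (hl : l ≠ []) {L : ℝ}
    (h : Tendsto (qHstar q l) atTop (𝓝 L)) : qZetaStar q l = L := by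
  obtain ⟨s, l, rfl⟩ := List.exists_cons_of_ne_nil hl
  refine HasSum.tsum_eq ((hasSum_iff_tendsto_nat_of_nonneg (fun k => ?_) L).2 ?_)
  · exact mul_nonneg (div_nonneg (pow_nonneg hq _) (pow_nonneg (qnum_nonneg hq _) _))
      (qHstar_nonneg hq _ _)
  · simpa only [qHstar, sum_Icc_one_eq_sum_range] using h

end

theorem stmt10 (q : ℝ) (hq0 : 0 < q) (hq1 : q < 1) (s : ℕ) :
    qZetaStar q (List.replicate s 2 ++ [1])
    = ∑' k : ℕ, (1 + q ^ (k + 1)) / qnum q (k + 1) ^ (2 * s + 1) *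
        q ^ ((k + 1) ^ 2 + s * (k + 1)) := by
  have hlim := tendsto_sum_qChooseRatio_mul hq0.le hq1 (qZetaTwoOneTerm_nonneg hq0.le s)
    (summable_qZetaTwoOneTerm hq0.le hq1 s)
  simp only [← qHstar_replicate_two_append_one hq0.le hq1] at hlim
  exact qZetaStar_eq_of_tendsto hq0.le (by simp) hlim
end
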